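/- For every natural number n ≥ 2, the discriminant d = 2(n² + n + 1) satisfies all of Hassett's K3-association conditions: 4 ∤ d, 9 ∤ d, and no odd prime p ≡ 2 (mod 3) divides d. -/
import Mathlib

private lemma aux_prime (p n : ℕ) (hp : p.Prime) (h2 : p % 3 = 2)
    (h : p ∣ n ^ 2 + n + 1) : False := by
  haveI := Fact.mk hp
  have hx : (n : ZMod p) ^ 2 + n + 1 = 0 := by
    have := (ZMod.natCast_eq_zero_iff (n ^ 2 + n + 1) p).2 h
    push_cast at this
    linear_combination this
  set x := (n : ZMod p) with hxdef
  have hp3 : p ≠ 3 := by omega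
  have hxne1 : x ≠ 1 := by
    intro h1
    rw [h1] at hx
    have h3 : ((3 : ℕ) : ZMod p) = 0 := by push_cast; linear_combination hx
    have := (ZMod.natCast_eq_zero_iff 3 p).1 h3
    have := (Nat.prime_dvd_prime_iff_eq hp Nat.prime_three).1 this
    exact hp3 this
  have hx3 : x ^ 3 = 1 := by linear_combination (x - 1) * hx
  have hord : orderOf x = 3 := by
    have hd := orderOf_dvd_of_pow_eq_one hx3
    rcases (Nat.dvd_prime Nat.prime_three).1 hd with h1 | h3
    · exact absurd (orderOf_eq_one_iff.1 h1) hxne1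
    · exact h3
  have hxne0 : x ≠ 0 := by
    intro h0
    rw [h0] at hx
    simp at hx
  have hdvd : orderOf x ∣ p - 1 := ZMod.orderOf_dvd_card_sub_one hxne0
  rw [hord] at hdvd
  have := hp.two_le
  omega

/-- For n ≥ 2, d = 2(n² + n + 1) satisfies all of Hassett's K3-association conditions. -/
theorem stmt_18 : ∀ n : ℕ, 2 ≤ n →
    ¬ (4 ∣ 2 * (n ^ 2 + n + 1)) ∧ ¬ (9 ∣ 2 * (n ^ 2 + n + 1)) ∧
    ∀ p : ℕ, p.Prime → Odd p → p % 3 = 2 → ¬ (p ∣ 2 * (n ^ 2 + n + 1)) := by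
  intro n _
  have hodd : (n ^ 2 + n + 1) % 2 = 1 := by
    have h := Nat.even_mul_succ_self n
    rcases h with ⟨k, hk⟩
    have : n ^ 2 + n = 2 * k := by nlinarith
    omega
  refine ⟨?_, ?_, ?_⟩
  · omega
  · intro h
    have h9 : 9 ∣ n ^ 2 + n + 1 := by omega
    have key : (n ^ 2 + n + 1) % 9 = ((n % 9) ^ 2 + (n % 9) + 1) % 9 := by
      conv_lhs => rw [Nat.add_mod, Nat.add_mod (n ^ 2) n, Nat.pow_mod]
      conv_rhs => rw [Nat.add_mod, Nat.add_mod ((n % 9) ^ 2) (n % 9)]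
      simp [Nat.mod_mod]
    have hr : n % 9 < 9 := Nat.mod_lt _ (by norm_num)
    interval_cases h' : n % 9 <;> omega
  · intro p hp hpodd h3 hdvd
    have hp2 : p ≠ 2 := by
      rintro rfl
      exact (by norm_num : ¬ Odd 2) hpodd
    have : p ∣ n ^ 2 + n + 1 := by
      rcases (Nat.Prime.dvd_mul hp).1 hdvd with h | h
      · exact absurd ((Nat.prime_dvd_prime_iff_eq hp Nat.prime_two).1 h) hp2
      · exact h
    exact aux_prime p n hp h3 this
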